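/- arXiv:1007.0743 — 2 statements merged into one kernel-verified Lean document; each statement's English description precedes it below -/
import Mathlib

section
/- Fractional integration by parts for the right Caputo derivative: for f absolutely continuous on [a,b], g continuous (with {}_aD_x^α g existing and integrable), and 0 < α < 1, one has ∫_a^b g(x)·({}^C_xD_b^α f)(x) dx = −[f(x)·({}_aI_x^{1−α} g)(x)]_{x=a}^{x=b} + ∫_a^b f(x)·({}_aD_x^α g)(x) dx. -/
/-!
Write the right Caputo derivative as `-I_{b-}^{1-α} f'`. Fubini on the triangle `a < x < t ≤ b`
moves the fractional integral from `f'` onto `g`, turning `∫ g · ᶜD_{b-}^α f` into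
`-∫ f' · I_{a+}^{1-α} g`; ordinary integration by parts against `I_{a+}^{1-α} g`, whose
derivative is `D_{a+}^α g`, finishes the proof. The kernel `(t - x)^{-α}` is integrable because
`α < 1`; this justifies Fubini and makes `I_{a+}^{1-α} g` continuous up to the endpoints.
-/

open MeasureTheory Real Set Filter intervalIntegral

/-- Left Riemann–Liouville fractional integral of order `μ`. -/
noncomputable def leftRLI (a μ : ℝ) (f : ℝ → ℝ) (x : ℝ) : ℝ :=
  (1 / Real.Gamma μ) * ∫ t in a..x, (x - t) ^ (μ - 1) * f t

/-- Right Riemann–Liouville fractional integral of order `μ`. -/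
noncomputable def rightRLI (b μ : ℝ) (f : ℝ → ℝ) (x : ℝ) : ℝ :=
  (1 / Real.Gamma μ) * ∫ t in x..b, (t - x) ^ (μ - 1) * f t

/-- Left Riemann–Liouville fractional derivative of order `α`. -/
noncomputable def leftRLD (a α : ℝ) (f : ℝ → ℝ) (x : ℝ) : ℝ :=
  deriv (leftRLI a (1 - α) f) x

/-- Right Riemann–Liouville fractional derivative of order `α`. -/
noncomputable def rightRLD (b α : ℝ) (f : ℝ → ℝ) (x : ℝ) : ℝ :=
  - deriv (rightRLI b (1 - α) f) x

/-- Left Caputo fractional derivative of order `α`. -/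
noncomputable def leftCaputo (a α : ℝ) (f : ℝ → ℝ) (x : ℝ) : ℝ :=
  (1 / Real.Gamma (1 - α)) * ∫ t in a..x, (x - t) ^ (-α) * deriv f t

/-- Right Caputo fractional derivative of order `α`. -/
noncomputable def rightCaputo (b α : ℝ) (f : ℝ → ℝ) (x : ℝ) : ℝ :=
  (-1 / Real.Gamma (1 - α)) * ∫ t in x..b, (t - x) ^ (-α) * deriv f t

/-- Combined Caputo derivative `{}^CD^{α,β}_γ`. -/
noncomputable def combC (a b α β γ : ℝ) (f : ℝ → ℝ) (x : ℝ) : ℝ :=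
  γ * leftCaputo a α f x + (1 - γ) * rightCaputo b β f x

/-- Combined Riemann–Liouville derivative `D^{β,α}_{1-γ}`. -/
noncomputable def combRL (a b α β γ : ℝ) (g : ℝ → ℝ) (x : ℝ) : ℝ :=
  (1 - γ) * leftRLD a β g x + γ * rightRLD b α g x

lemma intervalIntegrable_sub_rpow {μ : ℝ} (hμ : 0 < μ) (c u v : ℝ) :
    IntervalIntegrable (fun t => (c - t) ^ (μ - 1)) volume u v := by
  simpa using (intervalIntegrable_rpow' (a := c - u) (b := c - v) (r := μ - 1)
    (by linarith)).comp_sub_left c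

/-- Rescaling `t = a + (x - a) u` moves the singularity of the kernel to the fixed point `u = 1`,
so that continuity in `x` follows by dominated convergence. -/
lemma integral_sub_rpow_mul_eq_rpow_mul_integral {μ a x : ℝ} (hμ : 0 < μ) (hax : a ≤ x)
    (g : ℝ → ℝ) :
    ∫ t in a..x, (x - t) ^ (μ - 1) * g t
      = (x - a) ^ μ * ∫ u in (0 : ℝ)..1, (1 - u) ^ (μ - 1) * g (a + (x - a) * u) := by
  have hsub := smul_integral_comp_add_mul (a := 0) (b := 1)
    (fun t : ℝ => (x - t) ^ (μ - 1) * g t) (x - a) a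
  simp only [mul_zero, add_zero, mul_one, add_sub_cancel, smul_eq_mul] at hsub
  have hpow : (x - a) ^ μ = (x - a) * (x - a) ^ (μ - 1) := by
    rw [mul_comm, ← Real.rpow_add_one' (sub_nonneg.2 hax) (by linarith), sub_add_cancel]
  rw [← hsub, hpow, mul_assoc, ← intervalIntegral.integral_const_mul ((x - a) ^ (μ - 1))]
  congr 1
  refine integral_congr fun u hu => ?_
  rw [uIcc_of_le zero_le_one] at hu
  rw [show x - (a + (x - a) * u) = (x - a) * (1 - u) by ring,
    Real.mul_rpow (sub_nonneg.2 hax) (sub_nonneg.2 hu.2)]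
  ring

theorem continuousOn_leftRLI {a b μ : ℝ} {g : ℝ → ℝ} (hμ : 0 < μ)
    (hg : ContinuousOn g (Icc a b)) : ContinuousOn (leftRLI a μ g) (Icc a b) := by
  obtain ⟨M, hM⟩ := isCompact_Icc.exists_bound_of_continuousOn hg
  have hmaps : ∀ x ∈ Icc a b, ∀ u ∈ Icc (0 : ℝ) 1, a + (x - a) * u ∈ Icc a b := by
    intro x hx u hu
    constructor <;> nlinarith [hx.1, hx.2, hu.1, hu.2]
  have hI : ∀ u ∈ uIoc (0 : ℝ) 1, u ∈ Icc (0 : ℝ) 1 := fun u hu =>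
    Ioc_subset_Icc_self (by rwa [uIoc_of_le zero_le_one] at hu)
  have hK : ContinuousOn (fun x => ∫ u in (0 : ℝ)..1, (1 - u) ^ (μ - 1) * g (a + (x - a) * u))
      (Icc a b) := by
    intro x₀ hx₀
    refine continuousWithinAt_of_dominated_interval (bound := fun u => (1 - u) ^ (μ - 1) * M)
      (eventually_nhdsWithin_of_forall fun x hx => ?_)
      (eventually_nhdsWithin_of_forall fun x hx => ae_of_all _ fun u hu => ?_)
      ((intervalIntegrable_sub_rpow hμ 1 0 1).mul_const M) (ae_of_all _ fun u hu => ?_)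
    · have hker : Measurable fun u : ℝ => (1 - u) ^ (μ - 1) := by fun_prop
      refine hker.aestronglyMeasurable.mul ?_
      exact (hg.comp (by fun_prop) fun u hu => hmaps x hx u (hI u hu)).aestronglyMeasurable
        measurableSet_uIoc
    · rw [norm_mul, Real.norm_of_nonneg (Real.rpow_nonneg (by linarith [(hI u hu).2]) _)]
      exact mul_le_mul_of_nonneg_left (hM _ (hmaps x hx u (hI u hu)))
        (Real.rpow_nonneg (by linarith [(hI u hu).2]) _)
    · exact continuousWithinAt_const.mul ((hg _ (hmaps x₀ hx₀ u (hI u hu))).comp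
        (f := fun x => a + (x - a) * u) (by fun_prop : Continuous _).continuousWithinAt
        fun x hx => hmaps x hx u (hI u hu))
  have hpow : ContinuousOn (fun x => (x - a) ^ μ) (Icc a b) :=
    (continuous_sub_right a).continuousOn.rpow_const fun _ _ => Or.inr hμ.le
  refine ((continuousOn_const (c := 1 / Gamma μ)).mul (hpow.mul hK)).congr fun x hx => ?_
  rw [leftRLI, integral_sub_rpow_mul_eq_rpow_mul_integral hμ hx.1]
  rfl

def triangle (a b : ℝ) : Set (ℝ × ℝ) := {p | a < p.1 ∧ p.1 < p.2 ∧ p.2 ≤ b}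

lemma measurableSet_triangle (a b : ℝ) : MeasurableSet (triangle a b) :=
  (measurableSet_lt measurable_const measurable_fst).inter
    ((measurableSet_lt measurable_fst measurable_snd).inter
      (measurableSet_le measurable_snd measurable_const))

theorem integral_integral_triangle_swap {a b : ℝ} {F : ℝ → ℝ → ℝ} (hab : a ≤ b)
    (hF : IntegrableOn (Function.uncurry F) (triangle a b)) :
    ∫ x in a..b, ∫ t in x..b, F x t = ∫ t in a..b, ∫ x in a..t, F x t := by
  set Φ := (triangle a b).indicator (Function.uncurry F)
  have hΦ : Integrable Φ ((volume.restrict (Ioc a b)).prod (volume.restrict (Ioc a b))) := by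
    rw [Measure.prod_restrict, ← Measure.volume_eq_prod]
    exact (hF.integrable_indicator (measurableSet_triangle a b)).integrableOn
  have hslice_fst : ∀ x ∈ Ioc a b, ∫ t in Ioc a b, Φ (x, t) = ∫ t in x..b, F x t := by
    intro x hx
    have hΦx : (fun t => Φ (x, t)) = (Ioc x b).indicator (F x) := by
      ext t
      by_cases ht : x < t ∧ t ≤ b <;> simp_all [Φ, triangle]
    rw [hΦx, setIntegral_indicator measurableSet_Ioc,
      inter_eq_right.2 (Ioc_subset_Ioc_left hx.1.le), integral_of_le hx.2]
  have hslice_snd : ∀ t ∈ Ioc a b, ∫ x in Ioc a b, Φ (x, t) = ∫ x in a..t, F x t := by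
    intro t ht
    have hΦt : (fun x => Φ (x, t)) = (Ioo a t).indicator (fun x => F x t) := by
      ext x
      by_cases hx : a < x ∧ x < t <;> simp_all [Φ, triangle]
    rw [hΦt, setIntegral_indicator measurableSet_Ioo,
      inter_eq_right.2 (Ioo_subset_Ioc_self.trans (Ioc_subset_Ioc_right ht.2)),
      ← integral_Ioc_eq_integral_Ioo, integral_of_le ht.1.le]
  rw [integral_of_le hab, integral_of_le hab,
    ← setIntegral_congr_fun measurableSet_Ioc hslice_fst,
    ← setIntegral_congr_fun measurableSet_Ioc hslice_snd]
  exact integral_integral_swap hΦ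

/-- On the triangle the integrand is `ψ x` times the convolution integrand `φ t * k (x - t)` of
`φ` (extended by zero) and the reflected kernel `k s = (-s) ^ (μ - 1)`, both integrable. -/
lemma integrableOn_triangle_mul_rpow_sub_mul {a b μ : ℝ} {φ ψ : ℝ → ℝ} (hμ : 0 < μ)
    (hφ : IntervalIntegrable φ volume a b) (hψ : ContinuousOn ψ (Icc a b)) :
    IntegrableOn (Function.uncurry fun x t => ψ x * ((t - x) ^ (μ - 1) * φ t))
      (triangle a b) := by
  obtain ⟨M, hM⟩ := isCompact_Icc.exists_bound_of_continuousOn hψ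
  set k : ℝ → ℝ := (Ioo (a - b) 0).indicator fun s => (-s) ^ (μ - 1) with hk_def
  have hk : Integrable k := by
    refine (IntegrableOn.mono_set ?_ Ioo_subset_Ioc_self).integrable_indicator measurableSet_Ioo
    simpa using (intervalIntegrable_sub_rpow hμ 0 (a - b) 0).1
  have hconv : Integrable fun p : ℝ × ℝ => (Ioc a b).indicator φ p.2 * k (p.1 - p.2) := by
    rw [Measure.volume_eq_prod]
    exact (hφ.1.integrable_indicator measurableSet_Ioc).convolution_integrand
      (ContinuousLinearMap.mul ℝ ℝ) hk
  have hfst : ∀ p ∈ triangle a b, p.1 ∈ Icc a b := fun p hp =>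
    ⟨hp.1.le, hp.2.1.le.trans hp.2.2⟩
  refine IntegrableOn.congr_fun
    (f := fun p => ψ p.1 * ((Ioc a b).indicator φ p.2 * k (p.1 - p.2))) ?_ (fun p hp => ?_)
    (measurableSet_triangle a b)
  · exact hconv.integrableOn.bdd_mul
      ((hψ.comp continuousOn_fst hfst).aestronglyMeasurable (measurableSet_triangle a b))
      (ae_restrict_of_forall_mem (measurableSet_triangle a b) fun p hp => hM _ (hfst p hp))
  · obtain ⟨hx, hxt, htb⟩ := hp
    have hk' : k (p.1 - p.2) = (p.2 - p.1) ^ (μ - 1) := by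
      rw [hk_def, indicator_of_mem (show p.1 - p.2 ∈ Ioo (a - b) 0 by constructor <;> linarith),
        neg_sub]
    have hφp : (Ioc a b).indicator φ p.2 = φ p.2 :=
      indicator_of_mem (show p.2 ∈ Ioc a b from ⟨hx.trans hxt, htb⟩) _
    simp only [Function.uncurry, hφp, hk']
    ring

theorem integral_mul_rightRLI_eq_integral_mul_leftRLI {a b μ : ℝ} {φ ψ : ℝ → ℝ}
    (hμ : 0 < μ) (hab : a ≤ b) (hφ : IntervalIntegrable φ volume a b)
    (hψ : ContinuousOn ψ (Icc a b)) :
    ∫ x in a..b, ψ x * rightRLI b μ φ x = ∫ t in a..b, φ t * leftRLI a μ ψ t := by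
  have hswap := integral_integral_triangle_swap hab
    (integrableOn_triangle_mul_rpow_sub_mul hμ hφ hψ)
  simp only [rightRLI, leftRLI, mul_left_comm _ (1 / Gamma μ), intervalIntegral.integral_const_mul]
  congr 1
  simp only [← intervalIntegral.integral_const_mul]
  rw [hswap]
  exact integral_congr fun t _ => integral_congr fun x _ => by ring

lemma rightCaputo_eq_neg_rightRLI (b α : ℝ) (f : ℝ → ℝ) :
    rightCaputo b α f = -rightRLI b (1 - α) (deriv f) := by
  ext x
  simp only [rightCaputo, rightRLI, sub_sub_cancel_left, Pi.neg_apply]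
  ring

theorem caputo_right_integration_by_parts_general (a b α : ℝ) (hab : a < b)
    (hα : α ∈ Set.Ioo (0:ℝ) 1) (f g : ℝ → ℝ)
    (hf : ∀ x ∈ Set.Icc a b, DifferentiableAt ℝ f x)
    (hf' : IntervalIntegrable (deriv f) MeasureTheory.volume a b)
    (hg : ContinuousOn g (Set.Icc a b))
    (hgD : ∀ x ∈ Set.Ioo a b, DifferentiableAt ℝ (leftRLI a (1 - α) g) x)
    (hgDi : IntervalIntegrable (leftRLD a α g) MeasureTheory.volume a b) :
    ∫ x in a..b, g x * rightCaputo b α f x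
      = -(f b * leftRLI a (1 - α) g b - f a * leftRLI a (1 - α) g a)
        + ∫ x in a..b, f x * leftRLD a α g x := by
  have hμ : 0 < 1 - α := sub_pos.2 hα.2
  have hparts := integral_mul_deriv_eq_deriv_mul_of_hasDerivAt (u := f) (u' := deriv f)
    (v := leftRLI a (1 - α) g) (v' := leftRLD a α g)
    (by rw [uIcc_of_le hab.le]; exact fun x hx => (hf x hx).continuousAt.continuousWithinAt)
    (by rw [uIcc_of_le hab.le]; exact continuousOn_leftRLI hμ hg)
    (by rw [min_eq_left hab.le, max_eq_right hab.le]
        exact fun x hx => (hf x (Ioo_subset_Icc_self hx)).hasDerivAt)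
    (by rw [min_eq_left hab.le, max_eq_right hab.le]
        exact fun x hx => (hgD x hx).hasDerivAt)
    hf' hgDi
  calc ∫ x in a..b, g x * rightCaputo b α f x
      = -∫ x in a..b, g x * rightRLI b (1 - α) (deriv f) x := by
        simp [rightCaputo_eq_neg_rightRLI, intervalIntegral.integral_neg]
    _ = -∫ x in a..b, deriv f x * leftRLI a (1 - α) g x := by
        rw [integral_mul_rightRLI_eq_integral_mul_leftRLI hμ hab.le hf' hg]
    _ = _ := by rw [hparts]; ring

/-- fractional integration by parts for the right Caputo derivative. -/
theorem caputo_right_integration_by_parts (a b α : ℝ) (hab : a < b)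
    (hα : α ∈ Set.Ioo (0:ℝ) 1) (f g : ℝ → ℝ)
    (hf : ∀ x ∈ Set.Icc a b, DifferentiableAt ℝ f x)
    (hf' : IntervalIntegrable (deriv f) MeasureTheory.volume a b)
    (hg : ContinuousOn g (Set.Icc a b))
    (hgD : ∀ x ∈ Set.Ioo a b, DifferentiableAt ℝ (leftRLI a (1 - α) g) x)
    (hgDi : IntervalIntegrable (leftRLD a α g) MeasureTheory.volume a b)
    (hint : IntervalIntegrable (fun x => g x * rightCaputo b α f x)
      MeasureTheory.volume a b) :
    ∫ x in a..b, g x * rightCaputo b α f x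
      = -(f b * leftRLI a (1 - α) g b - f a * leftRLI a (1 - α) g a)
        + ∫ x in a..b, f x * leftRLD a α g x :=
  caputo_right_integration_by_parts_general a b α hab hα f g hf hf' hg hgD hgDi
end

section
/- Vanishing-at-endpoints obstruction for symmetric Riemann–Liouville derivatives (motivating the Caputo combined operator): if y : [a,b] → ℝ is such that both the left RL derivative {}_aD_x^α y and the right RL derivative {}_xD_b^α y (0 < α < 1) are continuous on the closed interval [a,b], and y is continuous on [a,b], then y(a) = 0 and y(b) = 0. -/
open MeasureTheory Real Set Filter intervalIntegral

/-! With `μ = 1 - α ∈ (0,1)`, the kernel `(x - t) ^ (μ - 1)` has mass `(x - a) ^ μ / μ` on `[a, x]`,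
so by continuity of `y` at `a` the integral `Γ(μ) · leftRLI a μ y x` is `y a · (x - a) ^ μ / μ`
up to `o((x - a) ^ μ)` as `x → a⁺`. On the other hand `leftRLI a μ y` vanishes at `a` and is
differentiable there, so it is `O(x - a) = o((x - a) ^ μ)` because `μ < 1`. Hence `y a = 0`.
The reflection `t ↦ a + b - t` exchanges left and right fractional integrals, which gives `y b = 0`. -/

open Topology

theorem integral_sub_rpow_sub_one {μ : ℝ} (hμ : 0 < μ) (a x : ℝ) :
    ∫ t in a..x, (x - t) ^ (μ - 1) = (x - a) ^ μ / μ := by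
  rw [intervalIntegral.integral_comp_sub_left (fun u => u ^ (μ - 1)) x, sub_self,
    integral_rpow (Or.inl (by linarith)), sub_add_cancel, zero_rpow hμ.ne', sub_zero]

theorem intervalIntegrable_sub_rpow_sub_one {μ : ℝ} (hμ : 0 < μ) (a x : ℝ) :
    IntervalIntegrable (fun t => (x - t) ^ (μ - 1)) volume a x := by
  simpa using ((intervalIntegrable_rpow' (a := 0) (b := x - a) (by linarith)).comp_sub_left x).symm

theorem abs_integral_sub_rpow_mul_le {μ ε a x : ℝ} {g : ℝ → ℝ} (hμ : 0 < μ) (hax : a ≤ x)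
    (hg : ∀ t ∈ Ioc a x, |g t| ≤ ε) :
    |∫ t in a..x, (x - t) ^ (μ - 1) * g t| ≤ ε * ((x - a) ^ μ / μ) := by
  rw [← Real.norm_eq_abs, ← integral_sub_rpow_sub_one hμ, ← intervalIntegral.integral_const_mul]
  refine intervalIntegral.norm_integral_le_of_norm_le hax (ae_of_all _ fun t ht => ?_)
    ((intervalIntegrable_sub_rpow_sub_one hμ a x).const_mul ε)
  have hw : 0 ≤ (x - t) ^ (μ - 1) := rpow_nonneg (by linarith [ht.2]) _
  rw [norm_mul, Real.norm_of_nonneg hw, mul_comm ε]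
  exact mul_le_mul_of_nonneg_left (hg t ht) hw

theorem tendsto_integral_sub_rpow_mul_div {μ a b : ℝ} {y : ℝ → ℝ} (hμ : 0 < μ) (hab : a < b)
    (hy : ContinuousOn y (Icc a b)) :
    Tendsto (fun x => (∫ t in a..x, (x - t) ^ (μ - 1) * y t) / ((x - a) ^ μ / μ))
      (𝓝[>] a) (𝓝 (y a)) := by
  rw [Metric.tendsto_nhdsWithin_nhds]
  intro ε hε
  obtain ⟨δ, hδ, hyδ⟩ := Metric.continuousWithinAt_iff.mp (hy a ⟨le_rfl, hab.le⟩) (ε / 2)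
    (half_pos hε)
  refine ⟨min δ (b - a), lt_min hδ (sub_pos.mpr hab), fun {x} (hx : a < x) hxδ => ?_⟩
  rw [Real.dist_eq, abs_of_pos (sub_pos.mpr hx)] at hxδ
  have hxb : x ≤ b := by linarith [min_le_right δ (b - a)]
  have hpow : 0 < (x - a) ^ μ := rpow_pos_of_pos (sub_pos.mpr hx) μ
  have hP : 0 < (x - a) ^ μ / μ := div_pos hpow hμ
  have hyx : ContinuousOn y (uIcc a x) :=
    hy.mono (uIcc_of_le hx.le ▸ Icc_subset_Icc le_rfl hxb)
  have hw := intervalIntegrable_sub_rpow_sub_one hμ a x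
  have hsplit : (∫ t in a..x, (x - t) ^ (μ - 1) * y t) / ((x - a) ^ μ / μ) - y a
      = (∫ t in a..x, (x - t) ^ (μ - 1) * (y t - y a)) / ((x - a) ^ μ / μ) := by
    simp_rw [mul_sub]
    rw [intervalIntegral.integral_sub (hw.mul_continuousOn hyx) (hw.mul_const _),
      intervalIntegral.integral_mul_const, integral_sub_rpow_sub_one hμ]
    field_simp [hpow.ne']
  have hbound := abs_integral_sub_rpow_mul_le (g := fun t => y t - y a) hμ hx.le
    fun t ht => by
      refine (hyδ ⟨ht.1.le, ht.2.trans hxb⟩ ?_).le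
      rw [Real.dist_eq, abs_of_pos (sub_pos.mpr ht.1)]
      linarith [ht.2, min_le_left δ (b - a)]
  rw [Real.dist_eq, hsplit, abs_div, abs_of_pos hP, div_lt_iff₀ hP]
  linarith [mul_lt_mul_of_pos_right (half_lt_self hε) hP]

theorem tendsto_div_rpow_of_hasDerivWithinAt {f : ℝ → ℝ} {f' a μ : ℝ}
    (hf : HasDerivWithinAt f f' (Ici a) a) (hfa : f a = 0) (hμ : μ < 1) :
    Tendsto (fun x => f x / (x - a) ^ μ) (𝓝[>] a) (𝓝 0) := by
  have hslope : Tendsto (fun x => f x / (x - a)) (𝓝[>] a) (𝓝 f') := by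
    have := (hasDerivWithinAt_iff_tendsto_slope' (lt_irrefl a)).mp hf.Ioi_of_Ici
    exact this.congr fun x => by rw [slope_def_field, hfa, sub_zero]
  have hpow : Tendsto (fun x => (x - a) ^ (1 - μ)) (𝓝[>] a) (𝓝 0) := by
    have : ContinuousAt (fun x => (x - a) ^ (1 - μ)) a :=
      (continuousAt_id.sub continuousAt_const).rpow_const (Or.inr (by linarith))
    simpa [zero_rpow (by linarith : 1 - μ ≠ 0)] using this.tendsto.mono_left nhdsWithin_le_nhds
  refine (mul_zero f' ▸ hslope.mul hpow).congr' (eventually_nhdsWithin_of_forall fun x hx => ?_)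
  have hxa : 0 < x - a := sub_pos.mpr hx
  rw [rpow_sub hxa, rpow_one]
  field_simp

theorem leftRLI_comp_sub_left (a c μ : ℝ) (y : ℝ → ℝ) (x : ℝ) :
    leftRLI a μ (fun t => y (c - t)) x = rightRLI (c - a) μ y (c - x) := by
  rw [leftRLI, rightRLI, ← intervalIntegral.integral_comp_sub_left
    (fun u => (u - (c - x)) ^ (μ - 1) * y u) c]
  simp only [sub_sub_sub_cancel_left]

theorem eq_zero_of_hasDerivWithinAt_leftRLI {a b μ D : ℝ} {y : ℝ → ℝ} (hab : a < b)
    (hμ0 : 0 < μ) (hμ1 : μ < 1) (hy : ContinuousOn y (Icc a b))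
    (hI : HasDerivWithinAt (leftRLI a μ y) D (Ici a) a) : y a = 0 := by
  have hΓ : Gamma μ ≠ 0 := (Gamma_pos_of_pos hμ0).ne'
  have hlim := (tendsto_div_rpow_of_hasDerivWithinAt hI (by simp [leftRLI]) hμ1).const_mul
    (Gamma μ * μ)
  rw [mul_zero] at hlim
  refine tendsto_nhds_unique (tendsto_integral_sub_rpow_mul_div hμ0 hab hy)
    (hlim.congr' (eventually_nhdsWithin_of_forall fun x (hx : a < x) => ?_))
  have hpow : (x - a) ^ μ ≠ 0 := (rpow_pos_of_pos (sub_pos.mpr hx) μ).ne'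
  simp only [leftRLI]
  field_simp

theorem eq_zero_of_hasDerivWithinAt_rightRLI {a b μ D : ℝ} {y : ℝ → ℝ} (hab : a < b)
    (hμ0 : 0 < μ) (hμ1 : μ < 1) (hy : ContinuousOn y (Icc a b))
    (hI : HasDerivWithinAt (rightRLI b μ y) D (Iic b) b) : y b = 0 := by
  have hz : ContinuousOn (fun t => y (a + b - t)) (Icc a b) :=
    hy.comp (by fun_prop) fun t ht => ⟨by linarith [ht.2], by linarith [ht.1]⟩
  have hreflect : leftRLI a μ (fun t => y (a + b - t)) = rightRLI b μ y ∘ (a + b - ·) := by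
    funext x
    rw [leftRLI_comp_sub_left, add_sub_cancel_left, Function.comp_apply]
  have hI' := hI.comp_of_eq a ((hasDerivAt_id' a).const_sub (a + b)).hasDerivWithinAt
    (fun x (hx : a ≤ x) => show a + b - x ≤ b by linarith) (by ring)
  rw [← hreflect] at hI'
  simpa using eq_zero_of_hasDerivWithinAt_leftRLI hab hμ0 hμ1 hz hI'

theorem rl_symmetric_forces_zero_boundary_general (a b α : ℝ) (hab : a < b)
    (hα : α ∈ Set.Ioo (0:ℝ) 1) (y : ℝ → ℝ)
    (hy : ContinuousOn y (Set.Icc a b))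
    (DL DR : ℝ → ℝ)
    -- the left RL derivative of y exists on [a,b] with values DL, continuous on [a,b]
    (hDL : ∀ x ∈ Set.Icc a b, HasDerivAt (leftRLI a (1 - α) y) (DL x) x)
    -- the right RL derivative of y exists on [a,b] with values -DR, continuous on [a,b]
    (hDR : ∀ x ∈ Set.Icc a b, HasDerivAt (rightRLI b (1 - α) y) (-(DR x)) x) :
    y a = 0 ∧ y b = 0 := by
  obtain ⟨hα0, hα1⟩ := hα
  have hμ0 : 0 < 1 - α := by linarith
  have hμ1 : 1 - α < 1 := by linarith
  exact ⟨eq_zero_of_hasDerivWithinAt_leftRLI hab hμ0 hμ1 hy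
      (hDL a (left_mem_Icc.mpr hab.le)).hasDerivWithinAt,
    eq_zero_of_hasDerivWithinAt_rightRLI hab hμ0 hμ1 hy
      (hDR b (right_mem_Icc.mpr hab.le)).hasDerivWithinAt⟩

/-- if `y` is continuous on `[a,b]` and both its left and right
Riemann–Liouville derivatives of order `α ∈ (0,1)` exist with continuous
(derivative) data on all of the closed interval `[a,b]`, then `y(a) = 0` and
`y(b) = 0`. -/
theorem rl_symmetric_forces_zero_boundary (a b α : ℝ) (hab : a < b)
    (hα : α ∈ Set.Ioo (0:ℝ) 1) (y : ℝ → ℝ)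
    (hy : ContinuousOn y (Set.Icc a b))
    (DL DR : ℝ → ℝ)
    -- the left RL derivative of y exists on [a,b] with values DL, continuous on [a,b]
    (hDL : ∀ x ∈ Set.Icc a b, HasDerivAt (leftRLI a (1 - α) y) (DL x) x)
    (hDLc : ContinuousOn DL (Set.Icc a b))
    -- the right RL derivative of y exists on [a,b] with values -DR, continuous on [a,b]
    (hDR : ∀ x ∈ Set.Icc a b, HasDerivAt (rightRLI b (1 - α) y) (-(DR x)) x)
    (hDRc : ContinuousOn DR (Set.Icc a b)) :
    y a = 0 ∧ y b = 0 :=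
  rl_symmetric_forces_zero_boundary_general a b α hab hα y hy DL DR hDL hDR
end
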